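/- Let $\{d_i\}$ and $\{\lambda_i\}$ be nondecreasing real sequences with $\delta_k := \sum_{i=1}^k(d_i - \lambda_i) \ge 0$ for all $k$ and $\liminf_{k\to\infty} \delta_k = 0$. Suppose there exists $N$ such that $\delta_N \le \delta_k$ for all $k \le N$, and define $\tilde{d}_1 = \lambda_1 + \delta_N$, $\tilde{d}_i = \lambda_i$ for $2 \le i \le N$, and $\tilde{d}_i = d_i$ for $i > N$. Then $\{d_i\}_{i=1}^N \preccurlyeq \{\tilde{d}_i\}_{i=1}^N$ in the sense of majorization. -/

import Mathlib

open Filter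

/-- Decreasing rearrangement of a finite real tuple. -/
noncomputable def decRearrange {N : ℕ} (a : Fin N → ℝ) : Fin N → ℝ :=
  fun i => a (Tuple.sort a i.rev)

/-- Majorization of finite real sequences: partial sums of the decreasing
rearrangements dominate, with equal total sums. -/
def Majorizes {N : ℕ} (a b : Fin N → ℝ) : Prop :=
  (∀ n : ℕ, ∑ i ∈ Finset.univ.filter (fun i : Fin N => (i : ℕ) < n), decRearrange a i
      ≤ ∑ i ∈ Finset.univ.filter (fun i : Fin N => (i : ℕ) < n), decRearrange b i) ∧
    ∑ i, a i = ∑ i, b i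

lemma strictMono_val_le {n N : ℕ} {f : Fin n → Fin N} (hf : StrictMono f) :
    ∀ m (h : m < n), m ≤ (f ⟨m, h⟩ : ℕ) := by
  intro m
  induction m with
  | zero => intro h; exact Nat.zero_le _
  | succ k ih =>
    intro h
    have hk : k < n := Nat.lt_of_succ_lt h
    have h1 : f ⟨k, hk⟩ < f ⟨k + 1, h⟩ := hf (by simp [Fin.lt_def])
    have h2 := ih hk
    have h3 : (f ⟨k, hk⟩ : ℕ) < (f ⟨k + 1, h⟩ : ℕ) := h1
    omega

lemma antitone_sum_le {N : ℕ} {c : Fin N → ℝ} (hc : Antitone c) (T : Finset (Fin N)) :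
    ∑ i ∈ T, c i ≤ ∑ i ∈ Finset.univ.filter (fun i : Fin N => (i : ℕ) < T.card), c i := by
  have ht : T.card ≤ N := by simpa using T.card_le_univ
  let f : Fin T.card ↪o Fin N := T.orderEmbOfFin rfl
  have hT : T = Finset.image f Finset.univ := by
    apply Finset.coe_injective
    rw [Finset.coe_image, Finset.coe_univ, Set.image_univ, Finset.range_orderEmbOfFin]
  have hF : Finset.univ.filter (fun i : Fin N => (i : ℕ) < T.card) =
      Finset.image (fun j : Fin T.card => Fin.castLE ht j) Finset.univ := by
    ext i
    simp only [Finset.mem_filter, Finset.mem_univ, true_and, Finset.mem_image]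
    constructor
    · intro hi; exact ⟨⟨(i : ℕ), hi⟩, rfl⟩
    · rintro ⟨j, rfl⟩; exact j.2
  calc ∑ i ∈ T, c i = ∑ j : Fin T.card, c (f j) := by
        conv_lhs => rw [hT]
        rw [Finset.sum_image (fun x _ y _ h => f.injective h)]
    _ ≤ ∑ j : Fin T.card, c (Fin.castLE ht j) := by
        apply Finset.sum_le_sum
        intro j _
        apply hc
        have := strictMono_val_le f.strictMono (j : ℕ) j.2
        rw [Fin.le_def]
        simpa using this
    _ = ∑ i ∈ Finset.univ.filter (fun i : Fin N => (i : ℕ) < T.card), c i := by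
        rw [hF, Finset.sum_image (fun x _ y _ h => Fin.castLE_injective ht h)]

lemma sum_le_decRearrange {N : ℕ} (b : Fin N → ℝ) (S : Finset (Fin N)) :
    ∑ i ∈ S, b i ≤
      ∑ i ∈ Finset.univ.filter (fun i : Fin N => (i : ℕ) < S.card), decRearrange b i := by
  have hanti : Antitone (decRearrange b) := by
    intro i j hij
    exact Tuple.monotone_sort b (Fin.rev_le_rev.mpr hij)
  set τ : Fin N → Fin N := fun i => Fin.rev ((Tuple.sort b)⁻¹ i) with hτ
  have hτinj : Function.Injective τ :=
    Fin.rev_injective.comp (Equiv.injective _)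
  have hcard : (S.image τ).card = S.card := Finset.card_image_of_injective _ hτinj
  have hsum : ∑ i ∈ S.image τ, decRearrange b i = ∑ i ∈ S, b i := by
    rw [Finset.sum_image (fun x _ y _ h => hτinj h)]
    refine Finset.sum_congr rfl fun i _ => ?_
    simp [decRearrange, τ, Fin.rev_rev]
  calc ∑ i ∈ S, b i = ∑ i ∈ S.image τ, decRearrange b i := hsum.symm
    _ ≤ ∑ i ∈ Finset.univ.filter (fun i : Fin N => (i : ℕ) < (S.image τ).card),
          decRearrange b i := antitone_sum_le hanti _
    _ = _ := by rw [hcard]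

lemma sum_decRearrange {N : ℕ} (a : Fin N → ℝ) : ∑ i, decRearrange a i = ∑ i, a i := by
  have := Equiv.sum_comp ((Fin.revPerm).trans (Tuple.sort a)) a
  simpa [decRearrange, Function.comp] using this

/-- Lemma (flat), combinatorial part: with $\delta_k = \sum_{i<k}(d_i-\lambda_i) \ge 0$,
$\liminf \delta_k = 0$, and $N$ such that $\delta_N \le \delta_k$ for all $k \le N$,
define $\tilde d_0 = \lambda_0 + \delta_N$, $\tilde d_i = \lambda_i$ for $1 \le i < N$,
$\tilde d_i = d_i$ for $i \ge N$.  Then $\{d_i\}_{i<N} \preccurlyeq \{\tilde d_i\}_{i<N}$. -/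
theorem stmt_9 (d lam : ℕ → ℝ) (hd : Monotone d) (hlam : Monotone lam)
    (hδ : ∀ k, 0 ≤ ∑ i ∈ Finset.range k, (d i - lam i))
    (hliminf : liminf (fun k => ((∑ i ∈ Finset.range k, (d i - lam i) : ℝ) : EReal)) atTop = 0)
    (N : ℕ) (hN : 0 < N)
    (hmin : ∀ k ≤ N, ∑ i ∈ Finset.range N, (d i - lam i) ≤ ∑ i ∈ Finset.range k, (d i - lam i)) :
    Majorizes (fun i : Fin N => d i)
      (fun i : Fin N =>
        if (i : ℕ) = 0 then lam 0 + ∑ j ∈ Finset.range N, (d j - lam j) else lam i) := by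
  set δN : ℝ := ∑ j ∈ Finset.range N, (d j - lam j) with hδN
  set a : Fin N → ℝ := fun i : Fin N => d i with ha
  set b : Fin N → ℝ := fun i : Fin N => if (i : ℕ) = 0 then lam 0 + δN else lam i with hb
  -- total sums are equal
  have hsum_eq : ∑ i, a i = ∑ i, b i := by
    rw [ha, hb, Fin.sum_univ_eq_sum_range (fun i => d i),
      Fin.sum_univ_eq_sum_range (fun i => if i = 0 then lam 0 + δN else lam i)]
    have h1 : ∀ i, (if i = 0 then lam 0 + δN else lam i) =
        lam i + (if i = 0 then δN else 0) := by
      intro i; by_cases h : i = 0 <;> simp [h]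
    simp_rw [h1]
    rw [Finset.sum_add_distrib, Finset.sum_ite_eq' (Finset.range N) 0 (fun _ => δN)]
    have h0 : (0 : ℕ) ∈ Finset.range N := Finset.mem_range.mpr hN
    rw [if_pos h0]
    have : δN = ∑ i ∈ Finset.range N, d i - ∑ i ∈ Finset.range N, lam i := by
      rw [hδN, Finset.sum_sub_distrib]
    linarith
  refine ⟨fun n => ?_, hsum_eq⟩
  by_cases hn : N ≤ n
  · -- filter is everything
    have hfil : Finset.univ.filter (fun i : Fin N => (i : ℕ) < n) = Finset.univ := by
      ext i; simp only [Finset.mem_filter, Finset.mem_univ, true_and, iff_true]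
      exact lt_of_lt_of_le i.2 hn
    rw [hfil, sum_decRearrange, sum_decRearrange, hsum_eq]
  · push_neg at hn
    -- n < N
    set F : Finset (Fin N) := Finset.univ.filter (fun i : Fin N => (i : ℕ) < n) with hF
    set G : Finset (Fin N) := Finset.univ.filter (fun i : Fin N => N - n ≤ (i : ℕ)) with hG
    have hGF : F = G.image Fin.rev := by
      ext i
      simp only [hF, hG, Finset.mem_filter, Finset.mem_univ, true_and, Finset.mem_image]
      constructor
      · intro hi
        refine ⟨i.rev, ?_, Fin.rev_rev i⟩
        simp only [Finset.mem_filter, Finset.mem_univ, true_and, Fin.val_rev]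
        omega
      · rintro ⟨j, hj, rfl⟩
        have := j.2
        simp only [Fin.val_rev]
        omega
    have hFcard : F.card = n := by
      have : F = Finset.image (fun j : Fin n => Fin.castLE hn.le j) Finset.univ := by
        ext i
        simp only [hF, Finset.mem_filter, Finset.mem_univ, true_and, Finset.mem_image]
        constructor
        · intro hi; exact ⟨⟨(i : ℕ), hi⟩, rfl⟩
        · rintro ⟨j, rfl⟩; exact j.2
      rw [this, Finset.card_image_of_injective _ (Fin.castLE_injective hn.le),
        Finset.card_univ, Fintype.card_fin]
    have hGcard : G.card = n := by
      have : G.card = (G.image Fin.rev).card :=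
        (Finset.card_image_of_injective _ Fin.rev_injective).symm
      rw [this, ← hGF, hFcard]
    -- LHS: a is monotone so its sort is the identity
    have hamono : Monotone a := fun i j hij => hd hij
    have hsorta : Tuple.sort a = Equiv.refl _ := Tuple.sort_eq_refl_iff_monotone.mpr hamono
    have hLHS : ∑ i ∈ F, decRearrange a i = ∑ i ∈ G, a i := by
      rw [hGF, Finset.sum_image (fun x _ y _ h => Fin.rev_injective h)]
      refine Finset.sum_congr rfl fun i _ => ?_
      simp [decRearrange, hsorta, Fin.rev_rev]
    -- on G, b equals lam
    have hbG : ∀ i ∈ G, b i = lam i := by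
      intro i hi
      simp only [hG, Finset.mem_filter, Finset.mem_univ, true_and] at hi
      have : (i : ℕ) ≠ 0 := by omega
      simp [hb, this]
    -- key inequality: ∑_G (d - lam) ≤ 0
    have hkey : ∑ i ∈ G, (d (i : ℕ) - lam (i : ℕ)) ≤ 0 := by
      have hIco : (Finset.range N).filter (fun k => N - n ≤ k) = Finset.Ico (N - n) N := by
        ext k
        simp only [Finset.mem_filter, Finset.mem_range, Finset.mem_Ico]
        omega
      have hconv : ∑ i ∈ G, (d (i : ℕ) - lam (i : ℕ)) =
          ∑ k ∈ Finset.Ico (N - n) N, (d k - lam k) := by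
        rw [hG, ← hIco, Finset.sum_filter, Finset.sum_filter]
        exact Fin.sum_univ_eq_sum_range (fun k => if N - n ≤ k then d k - lam k else 0) N
      have hsplit : ∑ k ∈ Finset.Ico (N - n) N, (d k - lam k) =
          δN - ∑ k ∈ Finset.range (N - n), (d k - lam k) := by
        rw [hδN, Finset.sum_Ico_eq_sub _ (by omega)]
      have hm := hmin (N - n) (by omega)
      rw [hconv, hsplit]
      rw [hδN] at *
      linarith
    calc ∑ i ∈ F, decRearrange a i = ∑ i ∈ G, a i := hLHS
      _ ≤ ∑ i ∈ G, b i := by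
          have h1 : ∑ i ∈ G, b i = ∑ i ∈ G, lam (i : ℕ) := Finset.sum_congr rfl hbG
          have h2 : ∑ i ∈ G, a i = ∑ i ∈ G, d (i : ℕ) := rfl
          have h3 : ∑ i ∈ G, (d (i : ℕ) - lam (i : ℕ)) =
              ∑ i ∈ G, d (i : ℕ) - ∑ i ∈ G, lam (i : ℕ) := Finset.sum_sub_distrib _ _
          rw [h1, h2]
          linarith [hkey, h3]
      _ ≤ ∑ i ∈ Finset.univ.filter (fun i : Fin N => (i : ℕ) < G.card), decRearrange b i :=
          sum_le_decRearrange b G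
      _ = ∑ i ∈ F, decRearrange b i := by rw [hGcard, hF]
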